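/- arXiv:1210.1879 — 5 statements merged into one kernel-verified Lean document; each statement's English description precedes it below -/
import Mathlib

section
/- Let G be a group that is locally noetherian-by-finite, i.e., G has a normal locally noetherian subgroup H of finite index. Let α ∈ U₁(ℤG) be a unit of finite order. Then for every element g ∈ G of infinite order, the trace α̃(g) = Σ_{h ∈ C_g} α(h) equals 0. -/
open scoped Classical

/-- The augmentation map `ℤG → ℤ`, sending `Σ α(g) g` to `Σ α(g)`. -/
noncomputable def aug (G : Type*) [Group G] : MonoidAlgebra ℤ G →ₐ[ℤ] ℤ :=
  MonoidAlgebra.lift ℤ ℤ G 1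

/-- The trace `α̃(g) = Σ_{h ∈ C_g} α(h)`, the sum of the coefficients of `α`
over the conjugacy class of `g`. -/
noncomputable def trc {G : Type*} [Group G] (α : MonoidAlgebra ℤ G) (g : G) : ℤ :=
  ∑ h ∈ α.coeff.support.filter fun h => IsConj g h, α.coeff h

/-- `α` has the unique trace property: there is `g ∈ G`, unique up to conjugacy,
with `α̃(g) ≠ 0`. -/
def HasUniqueTrace {G : Type*} [Group G] (α : MonoidAlgebra ℤ G) : Prop :=
  ∃ g : G, trc α g ≠ 0 ∧ ∀ h : G, trc α h ≠ 0 → IsConj g h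

/-- `G` is a UT-group: every torsion unit of augmentation 1 in `ℤG` has the
unique trace property. -/
def IsUTGroup (G : Type*) [Group G] : Prop :=
  ∀ α : (MonoidAlgebra ℤ G)ˣ, aug G ↑α = 1 → IsOfFinOrder α →
    HasUniqueTrace (α : MonoidAlgebra ℤ G)

/-- `G` is a p-UT group: every unit of augmentation 1 in `ℤG` of prime power order
has the unique trace property. -/
def IsPUTGroup (G : Type*) [Group G] : Prop :=
  ∀ α : (MonoidAlgebra ℤ G)ˣ, aug G ↑α = 1 →
    (∃ p k : ℕ, p.Prime ∧ orderOf α = p ^ k) → HasUniqueTrace (α : MonoidAlgebra ℤ G)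

/-- A group is noetherian if every subgroup is finitely generated
(equivalently, it satisfies the maximal condition on subgroups). -/
def GroupNoetherian (G : Type*) [Group G] : Prop := ∀ K : Subgroup G, K.FG

/-- A group is locally noetherian if every finitely generated subgroup is noetherian. -/
def LocallyNoetherian (G : Type*) [Group G] : Prop :=
  ∀ H : Subgroup G, H.FG → GroupNoetherian ↥H

/-!
Bass's argument. Suppose `α̃(g) ≠ 0`, let `n` be the order of `α`, and pick a prime `p` coprime
to `n` that does not divide `α̃(g)`. Expanding `v ^ p` in `ℤG` as a sum over `p`-tuples of
support elements and letting `ℤ/p` rotate the tuples gives, for every class function `ψ`, the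
congruence `Σ ψ(h) v^p(h) ≡ Σ ψ(h^p) v(h) (mod p)`: non-constant tuples come in orbits of size
`p`, and a constant tuple contributes `ψ(s^p) v(s)^p ≡ ψ(s^p) v(s)`. As `α ^ (q ^ j) = α` for
`q = p ^ φ(n)`, this forces, for every `j`, a support element `s` with `s ^ (q ^ j)` conjugate
to `g`. The support is finite, so one `s` serves two exponents, and then `g` is conjugate to
`g ^ Q` for some `Q ≥ 2`.

This is impossible for `g` of infinite order: if `y g y⁻¹ = g ^ Q`, the cyclic groups generated
by `y⁻ʲ g yʲ` form a strictly ascending chain, which cannot exist in a noetherian group. With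
`N = [G : H]`, the relation passes to `g ^ N` and `y ^ N`, which generate a finitely generated,
hence noetherian, subgroup of `H`.
-/

open Finset MulAction in
theorem IsPGroup.sum_modEq_sum_fixedPoints {p : ℕ} [Fact p.Prime] {P α : Type*} [Group P]
    [MulAction P α] [Fintype α] [DecidablePred (· ∈ fixedPoints P α)] (hP : IsPGroup p P)
    {F : α → ℤ} (hF : ∀ (g : P) (x : α), F (g • x) = F x) :
    ∑ x, F x ≡ ∑ x with x ∈ fixedPoints P α, F x [ZMOD p] := by
  let q : α → Quotient (orbitRel P α) := Quotient.mk _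
  have hq : ∀ x y, q x = q y ↔ x ∈ orbit P y := fun x y => Quotient.eq.trans orbitRel_apply
  rw [← sum_fiberwise univ q F, ← sum_fiberwise _ q F]
  refine Int.ModEq.sum fun ω _ => ?_
  induction ω using Quotient.inductionOn with | h x₀ => ?_
  have horbit : ({x | q x = q x₀} : Finset α) = (orbit P x₀).toFinset := by
    ext x
    simp [hq]
  rw [filter_filter]
  by_cases hx₀ : x₀ ∈ fixedPoints P α
  · have hfix : ∀ x, q x = q x₀ → x ∈ fixedPoints P α := fun x hx =>
      mem_fixedPoints'.mp hx₀ x ((hq x x₀).mp hx) ▸ hx₀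
    rw [filter_congr fun x _ => and_iff_right_of_imp (hfix x)]
  · have hnofix : ∀ x ∈ univ, ¬(x ∈ fixedPoints P α ∧ q x = q x₀) :=
      fun x _ ⟨hx, hxx₀⟩ =>
        hx₀ (mem_fixedPoints'.mp hx x₀ ((hq x₀ x).mp hxx₀.symm) ▸ hx)
    obtain ⟨k, hk⟩ := hP.card_orbit x₀
    have hk0 : k ≠ 0 := by
      rintro rfl
      exact hx₀ (mem_fixedPoints_iff_card_orbit_eq_one.mpr
        (by simpa [Nat.card_eq_fintype_card] using hk))
    rw [filter_false_of_mem hnofix, sum_empty, horbit,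
      sum_congr rfl (g := fun _ => F x₀) fun x hx => ?_, sum_const, nsmul_eq_mul,
      Int.modEq_zero_iff_dvd, Set.toFinset_card, ← Nat.card_eq_fintype_card, hk]
    · exact dvd_mul_of_dvd_left (by exact_mod_cast dvd_pow_self p hk0) _
    · obtain ⟨g, rfl⟩ := Set.mem_toFinset.mp hx
      exact hF g x₀

theorem Equiv.Perm.sum_modEq_sum_fixed {p : ℕ} [Fact p.Prime] {α : Type*} [Fintype α]
    [DecidableEq α] {σ : Equiv.Perm α} (hσ : σ ^ p = 1) {F : α → ℤ}
    (hF : ∀ x, F (σ x) = F x) :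
    ∑ x, F x ≡ ∑ x with σ x = x, F x [ZMOD p] := by
  have hP : IsPGroup p (Subgroup.zpowers σ) := by
    rintro ⟨_, k, rfl⟩
    refine ⟨1, Subtype.ext ?_⟩
    simp only [pow_one, Subgroup.coe_pow, Subgroup.coe_one]
    rw [← zpow_natCast, ← zpow_mul, mul_comm, zpow_mul, zpow_natCast, hσ, one_zpow]
  have hfin : IsOfFinOrder σ := isOfFinOrder_of_finite σ
  have hpow : ∀ (n : ℕ) x, F ((σ ^ n) x) = F x := by
    intro n
    induction n with
    | zero => simp
    | succ n ih => intro x; rw [pow_succ, Equiv.Perm.mul_apply, ih, hF]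
  convert hP.sum_modEq_sum_fixedPoints (α := α) (F := F) ?_ using 3
  · exact ⟨fun h => fun ⟨g, hg⟩ => smul_eq_self_of_mem_zpowers hg h,
      fun h => h ⟨σ, Subgroup.mem_zpowers σ⟩⟩
  · rintro ⟨g, hg⟩ x
    obtain ⟨n, rfl⟩ := hfin.mem_powers_iff_mem_zpowers.mpr hg
    exact hpow n x

section Necklace

open Fin.NatCast

variable {R ι : Type*}

theorem sum_pow_eq_sum_prod_ofFn [Semiring R] [Fintype ι] (x : ι → R) (n : ℕ) :
    (∑ i, x i) ^ n = ∑ f : Fin n → ι, (List.ofFn fun k => x (f k)).prod := by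
  induction n with
  | zero => simp
  | succ n ih =>
    rw [pow_succ', ih, Finset.sum_mul_sum, ← Fintype.sum_prod_type',
      ← (Fin.consEquiv fun _ => ι).sum_comp]
    simp [List.ofFn_succ, Fin.consEquiv]

variable (ι) in
def tupleRotate (m : ℕ) : Equiv.Perm (Fin (m + 1) → ι) where
  toFun f i := f (i + 1)
  invFun f i := f (i - 1)
  left_inv f := by ext; simp
  right_inv f := by ext; simp

theorem tupleRotate_pow_apply {m : ℕ} (n : ℕ) (f : Fin (m + 1) → ι) (i : Fin (m + 1)) :
    (tupleRotate ι m ^ n) f i = f (i + (n : Fin (m + 1))) := by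
  induction n generalizing f with
  | zero => simp
  | succ n ih => rw [pow_succ, Equiv.Perm.mul_apply, ih]; simp [tupleRotate, add_assoc]

theorem tupleRotate_pow_self (m : ℕ) : tupleRotate ι m ^ (m + 1) = 1 := by
  ext f i
  simp [tupleRotate_pow_apply]

theorem tupleRotate_eq_self_iff {m : ℕ} {f : Fin (m + 1) → ι} :
    tupleRotate ι m f = f ↔ ∃ c, Function.const _ c = f := by
  refine ⟨fun h => ⟨f 0, funext fun i => ?_⟩, fun ⟨c, hc⟩ => hc ▸ rfl⟩
  have := congrFun (Equiv.Perm.pow_apply_eq_self_of_apply_eq_self h i) 0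
  rw [tupleRotate_pow_apply, zero_add, Fin.cast_val_eq_self] at this
  exact this.symm

theorem prod_ofFn_tupleRotate [Monoid R] {m : ℕ} (g : Fin (m + 1) → R) :
    (List.ofFn (tupleRotate R m g)).prod = (List.ofFn fun i => g i.succ).prod * g 0 := by
  rw [List.ofFn_succ', List.concat_eq_append, List.prod_append]
  simp [tupleRotate, Fin.coeSucc_eq_succ]

theorem trace_sum_pow_prime_modEq [Ring R] [Fintype ι] (τ : R →+ ℤ)
    (hτ : ∀ a b, τ (a * b) = τ (b * a)) {p : ℕ} (hp : p.Prime) (x : ι → R) :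
    τ ((∑ i, x i) ^ p) ≡ ∑ i, τ (x i ^ p) [ZMOD p] := by
  have := Fact.mk hp
  obtain ⟨m, rfl⟩ : ∃ m, p = m + 1 := ⟨p - 1, (Nat.sub_add_cancel hp.one_le).symm⟩
  have hrot : ∀ f, τ (List.ofFn fun k => x (tupleRotate ι m f k)).prod =
      τ (List.ofFn fun k => x (f k)).prod := fun f => by
    conv_rhs =>
      rw [List.ofFn_succ, List.prod_cons, hτ, ← prod_ofFn_tupleRotate fun k => x (f k)]
    rfl
  calc τ ((∑ i, x i) ^ (m + 1))
      = ∑ f : Fin (m + 1) → ι, τ (List.ofFn fun k => x (f k)).prod := by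
        rw [sum_pow_eq_sum_prod_ofFn, map_sum]
    _ ≡ ∑ f with tupleRotate ι m f = f, τ (List.ofFn fun k => x (f k)).prod
          [ZMOD (m + 1 : ℕ)] :=
        Equiv.Perm.sum_modEq_sum_fixed (tupleRotate_pow_self m) hrot
    _ = ∑ i, τ (x i ^ (m + 1)) := by
        rw [show ({f | tupleRotate ι m f = f} : Finset _) =
            Finset.univ.map ⟨Function.const _, Function.const_injective⟩ by
          ext f; simp [tupleRotate_eq_self_iff]]
        simp only [Finset.sum_map, Function.Embedding.coeFn_mk, Function.const_apply,
          List.ofFn_const, List.prod_replicate]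

end Necklace

section GroupRing

variable {G : Type*}

open MonoidAlgebra

noncomputable def pairing (ψ : G → ℤ) : MonoidAlgebra ℤ G →+ ℤ :=
  (Finsupp.liftAddHom fun h => AddMonoidHom.mulLeft (ψ h)).comp coeffAddEquiv.toAddMonoidHom

theorem pairing_single (ψ : G → ℤ) (g : G) (c : ℤ) : pairing ψ (single g c) = ψ g * c :=
  Finsupp.liftAddHom_apply_single _ g c

theorem pairing_apply (ψ : G → ℤ) (v : MonoidAlgebra ℤ G) :
    pairing ψ v = ∑ h ∈ v.coeff.support, ψ h * v.coeff h :=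
  rfl

variable [Group G]

def IsClassFunction {β : Type*} (ψ : G → β) : Prop :=
  ∀ g h, ψ (h * g * h⁻¹) = ψ g

theorem IsClassFunction.apply_mul_comm {β : Type*} {ψ : G → β} (hψ : IsClassFunction ψ)
    (g h : G) : ψ (g * h) = ψ (h * g) := by
  rw [← hψ (g * h) h]
  group

theorem IsClassFunction.comp_pow {β : Type*} {ψ : G → β} (hψ : IsClassFunction ψ) (n : ℕ) :
    IsClassFunction fun g => ψ (g ^ n) := fun g h => by
  dsimp only
  rw [conj_pow, hψ]

theorem isClassFunction_isConj (g : G) :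
    IsClassFunction fun h => if IsConj g h then (1 : ℤ) else 0 := fun x h => by
  have hx : IsConj x (h * x * h⁻¹) := isConj_iff.mpr ⟨h, rfl⟩
  dsimp only
  rw [show IsConj g (h * x * h⁻¹) ↔ IsConj g x from
    ⟨fun hg => hg.trans hx.symm, (·.trans hx)⟩]

theorem pairing_mul_comm {ψ : G → ℤ} (hψ : IsClassFunction ψ) (a b : MonoidAlgebra ℤ G) :
    pairing ψ (a * b) = pairing ψ (b * a) := by
  induction a using MonoidAlgebra.induction_linear with
  | zero => simp
  | add a a' ha ha' => simp only [add_mul, mul_add, map_add, ha, ha']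
  | single g c =>
    induction b using MonoidAlgebra.induction_linear with
    | zero => simp
    | add b b' hb hb' => simp only [add_mul, mul_add, map_add, hb, hb']
    | single h d =>
      simp only [single_mul_single, pairing_single, hψ.apply_mul_comm g h, mul_comm c]

theorem pairing_pow_prime_modEq {ψ : G → ℤ} (hψ : IsClassFunction ψ) {p : ℕ} (hp : p.Prime)
    (v : MonoidAlgebra ℤ G) :
    pairing ψ (v ^ p) ≡ pairing (fun g => ψ (g ^ p)) v [ZMOD p] := by
  have hv : v = ∑ s : v.coeff.support, single (s : G) (v.coeff s) := by
    rw [Finset.sum_coe_sort v.coeff.support fun s => single s (v.coeff s)]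
    exact (sum_coeff_single v).symm
  conv_lhs => rw [hv]
  refine (trace_sum_pow_prime_modEq (pairing ψ) (pairing_mul_comm hψ) hp _).trans ?_
  rw [pairing_apply, ← Finset.sum_coe_sort v.coeff.support]
  refine Int.ModEq.sum fun s _ => ?_
  rw [single_pow, pairing_single]
  exact (Int.ModEq.pow_prime_eq_self hp _).mul_left _

theorem pairing_pow_prime_pow_modEq {ψ : G → ℤ} (hψ : IsClassFunction ψ) {p : ℕ}
    (hp : p.Prime) (k : ℕ) (v : MonoidAlgebra ℤ G) :
    pairing ψ (v ^ p ^ k) ≡ pairing (fun g => ψ (g ^ p ^ k)) v [ZMOD p] := by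
  induction k generalizing v with
  | zero => simp
  | succ k ih =>
    simp only [pow_succ', pow_mul]
    exact (ih (v ^ p)).trans (pairing_pow_prime_modEq (hψ.comp_pow _) hp v)

theorem trc_eq_pairing (v : MonoidAlgebra ℤ G) (g : G) :
    trc v g = pairing (fun h => if IsConj g h then 1 else 0) v := by
  simp [trc, pairing_apply, Finset.sum_filter]

theorem exists_mem_support_isConj_pow {p k : ℕ} (hp : p.Prime) {v : MonoidAlgebra ℤ G}
    (hv : v ^ p ^ k = v) {g : G} (hpv : ¬(p : ℤ) ∣ trc v g) :
    ∃ s ∈ v.coeff.support, IsConj g (s ^ p ^ k) := by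
  by_contra! h
  have := pairing_pow_prime_pow_modEq (isClassFunction_isConj g) hp k v
  rw [hv, ← trc_eq_pairing, pairing_apply,
    Finset.sum_eq_zero fun s hs => by rw [if_neg (h s hs), zero_mul]] at this
  exact hpv (Int.modEq_zero_iff_dvd.mp this)

end GroupRing

section Noetherian

variable {G : Type*} [Group G]

theorem notMem_zpowers_pow_of_not_isOfFinOrder {x : G} (hx : ¬IsOfFinOrder x) {Q : ℕ}
    (hQ : 2 ≤ Q) : x ∉ Subgroup.zpowers (x ^ Q) := by
  rintro ⟨t, ht⟩
  have hQt : (Q : ℤ) * t = 1 := injective_zpow_iff_not_isOfFinOrder.mpr hx <| by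
    simpa [zpow_mul] using ht
  have := Int.eq_one_of_mul_eq_one_right (by positivity) hQt
  omega

theorem GroupNoetherian.not_strictMono (hG : GroupNoetherian G) (A : ℕ → Subgroup G) :
    ¬StrictMono A := by
  intro hA
  obtain ⟨T, hT⟩ := hG (⨆ j, A j)
  have hdir : Directed (· ≤ ·) A := hA.monotone.directed_le
  have hTA : (T : Set G) ⊆ ⋃ j, (A j : Set G) := by
    rw [← Subgroup.coe_iSup_of_directed hdir, ← hT]
    exact Subgroup.subset_closure
  obtain ⟨J, hJ⟩ :=
    (hdir.mono_comp _ fun _ _ h => h).exists_mem_subset_of_finset_subset_biUnion hTA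
  have : A (J + 1) ≤ A J :=
    (le_iSup A (J + 1)).trans (hT ▸ (Subgroup.closure_le _).mpr hJ)
  exact (hA (Nat.lt_succ_self J)).not_ge this

theorem GroupNoetherian.not_isConj_pow (hG : GroupNoetherian G) {b : G} (hb : ¬IsOfFinOrder b)
    {Q : ℕ} (hQ : 2 ≤ Q) : ¬IsConj b (b ^ Q) := by
  intro hconj
  obtain ⟨y, hy⟩ := isConj_iff.mp hconj
  set c : ℕ → G := fun j => MulAut.conj (y ^ j)⁻¹ b with hc
  have hc_pow : ∀ j, c (j + 1) ^ Q = c j := by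
    intro j
    simp only [hc]
    rw [← map_pow, ← hy]
    simp only [MulAut.conj_apply]
    group
  have hc_inf : ∀ j, ¬IsOfFinOrder (c j) := fun j =>
    mt ((MulEquiv.injective _).isOfFinOrder_iff (f := (MulAut.conj (y ^ j)⁻¹).toMonoidHom)).mp hb
  refine hG.not_strictMono (fun j => Subgroup.zpowers (c j)) (strictMono_nat_of_lt_succ fun j => ?_)
  rw [← hc_pow j]
  exact lt_of_le_of_ne (Subgroup.zpowers_le.mpr (pow_mem (Subgroup.mem_zpowers _) Q))
    fun h => notMem_zpowers_pow_of_not_isOfFinOrder (hc_inf (j + 1)) hQ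
      (h ▸ Subgroup.mem_zpowers _)

theorem LocallyNoetherian.not_isConj_pow (hG : LocallyNoetherian G) {b : G}
    (hb : ¬IsOfFinOrder b) {Q : ℕ} (hQ : 2 ≤ Q) : ¬IsConj b (b ^ Q) := by
  intro hconj
  obtain ⟨y, hy⟩ := isConj_iff.mp hconj
  set K := Subgroup.closure {b, y}
  have hbK : b ∈ K := Subgroup.subset_closure (by simp)
  have hyK : y ∈ K := Subgroup.subset_closure (by simp)
  refine (hG K ⟨{b, y}, by simp [K]⟩).not_isConj_pow (b := ⟨b, hbK⟩)
    (mt (Submonoid.isOfFinOrder_coe (H := K.toSubmonoid)).mpr hb) hQ ?_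
  exact isConj_iff.mpr ⟨⟨y, hyK⟩, Subtype.ext hy⟩

theorem pow_mul_pow_mul_inv_pow {y b : G} {Q : ℕ} (h : y * b * y⁻¹ = b ^ Q) (m n : ℕ) :
    y ^ n * b ^ m * (y ^ n)⁻¹ = (b ^ m) ^ Q ^ n := by
  induction n with
  | zero => simp
  | succ n ih =>
    have : y ^ (n + 1) * b ^ m * (y ^ (n + 1))⁻¹ =
        y * (y ^ n * b ^ m * (y ^ n)⁻¹) * y⁻¹ := by
      group
    rw [this, ih, ← pow_mul, ← conj_pow, h, ← pow_mul, ← pow_mul]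
    ring_nf

theorem Subgroup.not_isConj_pow_of_locallyNoetherian (H : Subgroup G) [H.Normal] [H.FiniteIndex]
    (hH : LocallyNoetherian H) {b : G} (hb : ¬IsOfFinOrder b) {Q : ℕ} (hQ : 2 ≤ Q) :
    ¬IsConj b (b ^ Q) := by
  intro hconj
  obtain ⟨y, hy⟩ := isConj_iff.mp hconj
  set N := H.index
  have hN : N ≠ 0 := Subgroup.FiniteIndex.index_ne_zero
  refine hH.not_isConj_pow (b := ⟨b ^ N, H.pow_index_mem b⟩) ?_
    (Q := Q ^ N) ((Nat.le_self_pow hN Q).trans' hQ) ?_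
  · rw [← Submonoid.isOfFinOrder_coe (H := H.toSubmonoid)]
    simpa [isOfFinOrder_pow, hN] using hb
  · exact isConj_iff.mpr
      ⟨⟨y ^ N, H.pow_index_mem y⟩, Subtype.ext (pow_mul_pow_mul_inv_pow hy N N)⟩

end Noetherian

theorem exists_prime_coprime_not_dvd {n : ℕ} (hn : n ≠ 0) {t : ℤ} (ht : t ≠ 0) :
    ∃ p : ℕ, p.Prime ∧ p.Coprime n ∧ ¬(p : ℤ) ∣ t := by
  obtain ⟨p, hle, hp⟩ := Nat.exists_infinite_primes (n * t.natAbs + 1)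
  have hndvd : ¬p ∣ n * t.natAbs := fun h => by
    have := Nat.le_of_dvd (by positivity) h
    omega
  exact ⟨p, hp, hp.coprime_iff_not_dvd.mpr fun h => hndvd (h.mul_right _),
    fun h => hndvd ((Int.natCast_dvd.mp h).mul_left _)⟩

theorem pow_pow_totient_pow_eq_self {M : Type*} [Monoid M] {x : M} {p : ℕ}
    (hp : p.Coprime (orderOf x)) (j : ℕ) : x ^ (p ^ (orderOf x).totient) ^ j = x := by
  have h : (p ^ (orderOf x).totient) ^ j ≡ 1 [MOD orderOf x] := by
    simpa using (Nat.ModEq.pow_totient hp).pow j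
  rw [← pow_mod_orderOf, h, pow_mod_orderOf, pow_one]

theorem exists_isConj_self_pow {G : Type*} [Group G] {S : Finset G} {g : G} {q : ℕ}
    (hq : 2 ≤ q) (h : ∀ j, ∃ s ∈ S, IsConj g (s ^ q ^ j)) :
    ∃ Q, 2 ≤ Q ∧ IsConj g (g ^ Q) := by
  choose s hs hconj using h
  have key : ∀ i j, i < j → s i = s j → ∃ Q, 2 ≤ Q ∧ IsConj g (g ^ Q) := by
    intro i j hij hsij
    refine ⟨q ^ (j - i), (Nat.le_self_pow (by omega) q).trans' hq, ?_⟩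
    have hj : IsConj g ((s i ^ q ^ i) ^ q ^ (j - i)) := by
      rw [← pow_mul, ← pow_add, Nat.add_sub_cancel' hij.le, hsij]
      exact hconj j
    exact hj.trans ((hconj i).pow _).symm
  obtain ⟨i, j, hne, hij⟩ := Finite.exists_ne_map_eq_of_infinite fun j => (⟨s j, hs j⟩ : S)
  rcases hne.lt_or_gt with hlt | hlt
  · exact key i j hlt (congrArg Subtype.val hij)
  · exact key j i hlt (congrArg Subtype.val hij).symm

theorem trace_eq_zero_of_infinite_order_general {G : Type*} [Group G]
    (H : Subgroup G) (hHnorm : H.Normal) (hHfin : H.FiniteIndex)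
    (hHnoeth : LocallyNoetherian ↥H)
    (α : (MonoidAlgebra ℤ G)ˣ) (hord : IsOfFinOrder α)
    (g : G) (hg : ¬ IsOfFinOrder g) :
    trc (α : MonoidAlgebra ℤ G) g = 0 := by
  by_contra htrc
  obtain ⟨p, hp, hpn, hptrc⟩ := exists_prime_coprime_not_dvd hord.orderOf_pos.ne' htrc
  have hαpow : ∀ j, (α : MonoidAlgebra ℤ G) ^ p ^ ((orderOf α).totient * j) = α := fun j => by
    rw [pow_mul, ← Units.val_pow_eq_pow_val, pow_pow_totient_pow_eq_self hpn]
  have hq : 2 ≤ p ^ (orderOf α).totient :=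
    hp.two_le.trans (Nat.le_self_pow (Nat.totient_pos.mpr hord.orderOf_pos).ne' p)
  obtain ⟨Q, hQ, hgQ⟩ := exists_isConj_self_pow hq fun j => by
    simpa only [pow_mul] using exists_mem_support_isConj_pow hp (hαpow j) hptrc
  exact H.not_isConj_pow_of_locallyNoetherian hHnoeth hg hQ hgQ

/-- If `G` has a normal locally noetherian subgroup of finite index and
`α ∈ U₁(ℤG)` is a torsion unit, then `α̃(g) = 0` for every `g ∈ G` of infinite order. -/
theorem trace_eq_zero_of_infinite_order {G : Type*} [Group G]
    (H : Subgroup G) (hHnorm : H.Normal) (hHfin : H.FiniteIndex)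
    (hHnoeth : LocallyNoetherian ↥H)
    (α : (MonoidAlgebra ℤ G)ˣ) (hα : aug G ↑α = 1) (hord : IsOfFinOrder α)
    (g : G) (hg : ¬ IsOfFinOrder g) :
    trc (α : MonoidAlgebra ℤ G) g = 0 :=
  trace_eq_zero_of_infinite_order_general H hHnorm hHfin hHnoeth α hord g hg
end

section
/- Let D∞ be the infinite dihedral group. Then every non-trivial finite subgroup of U₁(ℤD∞) has order 2. -/
open scoped Classical

/-!
The map `r i ↦ diag(Tⁱ, T⁻ⁱ)`, `sr i ↦ [[0, T⁻ⁱ], [Tⁱ, 0]]` extends to an embedding `ρ` of `ℤD∞`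
into `2 × 2` matrices over `ℤ[T, T⁻¹]`. If `u` has finite order, so does every specialisation
`T ↦ x ≠ 0` of `ρ(u)` over an algebraically closed field, whose trace and determinant therefore
lie in a finite set. A Laurent polynomial taking finitely many values is constant, so `ρ(u)` has
trace `c ∈ ℤ` and determinant `e ∈ ℤ`, and Cayley–Hamilton pulls back to `u² - c u + e = 0` in
`ℤD∞`. If `e = 1`, augmentation gives `c = 2`, i.e. `(u - 1)² = 0`, and a unipotent element of
finite order is `1`. So `u ↦ e` embeds a finite subgroup of `U₁(ℤD∞)` into `ℤˣ = {±1}`.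
-/

open LaurentPolynomial Polynomial

theorem LaurentPolynomial.exists_eq_C_of_forall_eval₂_mem {R K : Type*} [CommRing R] [Field K]
    [Infinite K] {f : R →+* K} (hf : Function.Injective f) {p : R[T;T⁻¹]} (S : Finset K)
    (h : ∀ x : Kˣ, eval₂ f x p ∈ S) : ∃ c, p = LaurentPolynomial.C c := by
  obtain ⟨n, q, hq⟩ := p.exists_T_pow
  -- every `x ≠ 0` is a root of one of the factors, so the product has infinitely many roots
  have hvanish : ∏ s ∈ S, (q.map f - Polynomial.C s * X ^ n) = 0 := by
    refine eq_zero_of_infinite_isRoot _ ((Set.finite_singleton 0).infinite_compl.mono ?_)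
    intro x (hx : x ≠ 0)
    have hq' := congrArg (eval₂ f (Units.mk0 x hx)) hq
    rw [eval₂_toLaurent, map_mul, eval₂_T, zpow_natCast, Units.val_pow_eq_pow_val,
      Units.val_mk0] at hq'
    simp only [Set.mem_ofPred_eq, IsRoot, eval_prod, eval_sub, eval_map, eval_mul, eval_C,
      eval_pow, eval_X, hq']
    exact Finset.prod_eq_zero (h (Units.mk0 x hx)) (sub_self _)
  obtain ⟨s, -, hs⟩ := Finset.prod_eq_zero_iff.1 hvanish
  obtain ⟨c, rfl⟩ : ∃ c, q = Polynomial.C c * X ^ n := by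
    refine ⟨q.coeff n, Polynomial.ext fun k => ?_⟩
    rw [coeff_C_mul_X_pow]
    split_ifs with hk
    · rw [hk]
    · apply hf
      simpa [coeff_C_mul_X_pow, hk] using congrArg (coeff · k) (sub_eq_zero.1 hs)
  refine ⟨c, (isUnit_T (n : ℤ)).mul_left_injective ?_⟩
  simp only [← hq, toLaurent_C_mul_X_pow]

theorem Matrix.exists_finset_forall_trace_mem_of_pow_eq_one {K ι : Type*} [Field K]
    [IsAlgClosed K] [Fintype ι] [DecidableEq ι] {n : ℕ} (hn : n ≠ 0) :
    ∃ S : Finset K, ∀ A : Matrix ι ι K, A ^ n = 1 → A.trace ∈ S := by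
  refine ⟨((nthRootsFinset n (1 : K)).sym (Fintype.card ι)).image
    fun s : Sym K (Fintype.card ι) => (s : Multiset K).sum, fun A hA => ?_⟩
  have hcard : A.charpoly.roots.card = Fintype.card ι := by
    rw [IsAlgClosed.card_roots_eq_natDegree, charpoly_natDegree_eq_dim]
  refine Finset.mem_image.2 ⟨Sym.mk A.charpoly.roots hcard, Finset.mem_sym_iff.2 fun z hz => ?_,
    A.trace_eq_sum_roots_charpoly.symm⟩
  have : Nonempty ι := Fintype.card_pos_iff.1 (hcard ▸ Multiset.card_pos_iff_exists_mem.2 ⟨z, hz⟩)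
  have hz_pow := spectrum.pow_mem_pow A n (mem_spectrum_of_isRoot_charpoly (isRoot_of_mem_roots hz))
  rw [hA, spectrum.one_eq] at hz_pow
  exact (mem_nthRootsFinset (Nat.pos_of_ne_zero hn) 1).2 hz_pow

theorem Matrix.exists_trace_eq_C_and_det_eq_C_of_pow_eq_one {R ι : Type*} [CommRing R]
    [IsDomain R] [Fintype ι] [DecidableEq ι] {M : Matrix ι ι R[T;T⁻¹]} {n : ℕ} (hn : n ≠ 0)
    (hM : M ^ n = 1) :
    (∃ c, M.trace = LaurentPolynomial.C c) ∧ ∃ e, M.det = LaurentPolynomial.C e := by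
  let K := AlgebraicClosure (FractionRing R)
  let f : R →+* K := (algebraMap (FractionRing R) K).comp (algebraMap R (FractionRing R))
  have hf : Function.Injective f :=
    (algebraMap (FractionRing R) K).injective.comp (IsFractionRing.injective R (FractionRing R))
  have hspec (x : Kˣ) : ((LaurentPolynomial.eval₂ f x).mapMatrix M) ^ n = 1 := by
    rw [← map_pow, hM, map_one]
  obtain ⟨S, hS⟩ := exists_finset_forall_trace_mem_of_pow_eq_one (K := K) (ι := ι) hn
  refine ⟨exists_eq_C_of_forall_eval₂_mem hf S fun x => ?_,
    exists_eq_C_of_forall_eval₂_mem hf (nthRootsFinset n (1 : K)) fun x => ?_⟩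
  · rw [AddMonoidHom.map_trace]
    exact hS _ (hspec x)
  · rw [mem_nthRootsFinset (Nat.pos_of_ne_zero hn), RingHom.map_det, ← det_pow, hspec, det_one]

theorem Matrix.sq_sub_trace_smul_add_det_smul_eq_zero {R : Type*} [CommRing R] [Nontrivial R]
    (M : Matrix (Fin 2) (Fin 2) R) :
    M ^ 2 - M.trace • M + M.det • (1 : Matrix (Fin 2) (Fin 2) R) = 0 := by
  simpa [charpoly_fin_two, Algebra.smul_def] using M.aeval_self_charpoly

instance MonoidAlgebra.instIsAddTorsionFree {R M : Type*} [Semiring R] [IsAddTorsionFree R] :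
    IsAddTorsionFree (MonoidAlgebra R M) :=
  MonoidAlgebra.coeff_injective.isAddTorsionFree MonoidAlgebra.coeffAddEquiv.toAddMonoidHom

theorem eq_one_of_pow_eq_one_of_sq_sub_one_eq_zero {A : Type*} [Ring A] [IsAddTorsionFree A]
    {u : A} {n : ℕ} (hn : n ≠ 0) (hu : u ^ n = 1) (h : (u - 1) ^ 2 = 0) : u = 1 := by
  have hmul : (u - 1) * u = u - 1 := by
    rwa [sq, mul_sub, mul_one, sub_eq_zero] at h
  have hpow (k : ℕ) : u ^ k = 1 + k • (u - 1) := by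
    induction k with
    | zero => simp
    | succ k ih => rw [pow_succ, ih, add_mul, one_mul, smul_mul_assoc, hmul, succ_nsmul]; abel
  have : n • (u - 1) = n • 0 := by rw [smul_zero, ← add_eq_left, ← hpow, hu]
  exact sub_eq_zero.1 (nsmul_right_injective hn this)

namespace DihedralGroup

variable (R : Type*) [CommRing R]

-- `ZMod 0` is `ℤ` only up to unfolding, which `simp` does not see through: hence this restatement
-- of `T_add`, and the `change ℤ at _` below.
private theorem T_mul_T (i j : ZMod 0) : (T i * T j : R[T;T⁻¹]) = T (i + j) := (T_add i j).symm

noncomputable def toLaurentMatrix : DihedralGroup 0 →* Matrix (Fin 2) (Fin 2) R[T;T⁻¹] where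
  toFun
    | r i => !![T i, 0; 0, T (-i)]
    | sr i => !![0, T (-i); T i, 0]
  map_one' := by
    show !![T 0, 0; 0, T (-0)] = 1
    simp [Matrix.one_fin_two, T_zero]
  map_mul' := by
    rintro (i | i) (j | j) <;>
      simp only [r_mul_r, r_mul_sr, sr_mul_r, sr_mul_sr, Matrix.mul_fin_two, mul_zero, zero_mul,
        add_zero, zero_add, T_mul_T] <;> ring_nf

noncomputable def laurentRep :
    MonoidAlgebra R (DihedralGroup 0) →ₐ[R] Matrix (Fin 2) (Fin 2) R[T;T⁻¹] :=
  MonoidAlgebra.lift R _ _ (toLaurentMatrix R)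

variable {R}

theorem coeff_laurentRep_zero_zero (α : MonoidAlgebra R (DihedralGroup 0)) (i : ℤ) :
    (laurentRep R α 0 0).coeff i = α.coeff (r i) := by
  induction α using MonoidAlgebra.induction_linear with
  | zero => simp
  | add α β hα hβ => simp [hα, hβ]
  | single g c =>
    rcases g with j | j <;> change ℤ at j
    · simp [laurentRep, toLaurentMatrix, Finsupp.single_apply]; grind
    · simp [laurentRep, toLaurentMatrix]

theorem coeff_laurentRep_one_zero (α : MonoidAlgebra R (DihedralGroup 0)) (i : ℤ) :
    (laurentRep R α 1 0).coeff i = α.coeff (sr i) := by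
  induction α using MonoidAlgebra.induction_linear with
  | zero => simp
  | add α β hα hβ => simp [hα, hβ]
  | single g c =>
    rcases g with j | j <;> change ℤ at j
    · simp [laurentRep, toLaurentMatrix]
    · simp [laurentRep, toLaurentMatrix, Finsupp.single_apply]; grind

theorem laurentRep_injective : Function.Injective (laurentRep R) := by
  refine (injective_iff_map_eq_zero _).2 fun α hα => ?_
  ext (i | i) <;> change ℤ at i
  · simpa [hα] using (coeff_laurentRep_zero_zero α i).symm
  · simpa [hα] using (coeff_laurentRep_one_zero α i).symm

noncomputable def detAtOne : MonoidAlgebra ℤ (DihedralGroup 0) →* ℤ :=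
  (LaurentPolynomial.eval₂ (RingHom.id ℤ) 1 : ℤ[T;T⁻¹] →+* ℤ).toMonoidHom.comp
    (Matrix.detMonoidHom.comp (laurentRep ℤ).toMonoidHom)

theorem eq_one_of_detAtOne_eq_one {u : (MonoidAlgebra ℤ (DihedralGroup 0))ˣ}
    (hfin : IsOfFinOrder u) (haug : aug (DihedralGroup 0) u = 1) (hdet : detAtOne u = 1) :
    u = 1 := by
  obtain ⟨n, hn, hun⟩ := hfin.exists_pow_eq_one
  set α : MonoidAlgebra ℤ (DihedralGroup 0) := ↑u
  have hα : α ^ n = 1 := by rw [← Units.val_pow_eq_pow_val, hun, Units.val_one]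
  obtain ⟨⟨c, hc⟩, ⟨e, he⟩⟩ := (laurentRep ℤ α).exists_trace_eq_C_and_det_eq_C_of_pow_eq_one
    hn.ne' (by rw [← map_pow, hα, map_one])
  have he1 : e = 1 := by simpa [detAtOne, he] using hdet
  have hquad : α ^ 2 - c • α + 1 = 0 := by
    apply laurentRep_injective
    have := (laurentRep ℤ α).sq_sub_trace_smul_add_det_smul_eq_zero
    rw [hc, he, he1, LaurentPolynomial.C_eq_algebraMap, algebraMap_smul, map_one, one_smul] at this
    simpa using this
  have hc2 : c = 2 := by
    have := congrArg (aug (DihedralGroup 0)) hquad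
    simp [haug] at this
    omega
  refine Units.val_eq_one.1 (eq_one_of_pow_eq_one_of_sq_sub_one_eq_zero hn.ne' hα ?_)
  rw [← hquad, hc2]
  noncomm_ring

end DihedralGroup

/-- Every non-trivial finite subgroup of `U₁(ℤ D∞)`, where `D∞ = DihedralGroup 0`
is the infinite dihedral group, has order 2. -/
theorem card_finite_subgroup_infinite_dihedral
    (A : Subgroup (MonoidAlgebra ℤ (DihedralGroup 0))ˣ)
    (hA : ∀ a ∈ A, aug (DihedralGroup 0) ↑a = 1)
    (hAfin : Finite A) (hAne : A ≠ ⊥) :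
    Nat.card A = 2 := by
  have hinj : Function.Injective ((Units.map DihedralGroup.detAtOne).comp A.subtype) :=
    (injective_iff_map_eq_one _).2 fun a hdet => Subtype.ext <|
      DihedralGroup.eq_one_of_detAtOne_eq_one (A.subtype.isOfFinOrder (isOfFinOrder_of_finite a))
        (hA a a.2) (congrArg Units.val hdet)
  have hle : Nat.card A ≤ Nat.card ℤˣ := Nat.card_le_card_of_injective _ hinj
  rw [Nat.card_eq_fintype_card (α := ℤˣ), Fintype.card_units_int] at hle
  have hgt : 1 < Nat.card A := (Subgroup.one_lt_card_iff_ne_bot A).2 hAne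
  omega
end

section
/- Let G be a group generated by an abelian subgroup A and an element t ∈ G such that t² ∈ A and t⁻¹at = a⁻¹ for every a ∈ A. Then for every g ∈ G with g ∉ A, the subgroup K(g) = [g, G] equals the set {a² : a ∈ A}. -/
/-!
Since `t` normalises `A` and `t² ∈ A`, every element of `G` is either in `A` or of the form
`t * a` with `a ∈ A`. For `g = t * a`, the inversion rule gives `[g, c] = c²` for `c ∈ A` and
`[g, t * b] = (a⁻¹ * b)²`, so the commutators `[g, x]` are exactly the squares of elements of `A`.
As `A` is abelian these squares already form a subgroup, which is therefore `K(g)`.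
-/

/-- `K(g) = [g, G]`, the subgroup generated by the commutators `[g, x] = g⁻¹x⁻¹gx`. -/
def Kcomm {G : Type*} [Group G] (g : G) : Subgroup G :=
  Subgroup.closure {c : G | ∃ x : G, c = g⁻¹ * x⁻¹ * g * x}

section

variable {G : Type*} [Group G] {A : Subgroup G} {t : G}

theorem mem_or_exists_eq_mul_of_closure_eq_top (hconj : ∀ c ∈ A, t⁻¹ * c * t ∈ A)
    (ht2 : t ^ 2 ∈ A) (hgen : Subgroup.closure ((A : Set G) ∪ {t}) = ⊤) (x : G) :
    x ∈ A ∨ ∃ a ∈ A, x = t * a := by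
  have hx : x ∈ Subgroup.closure ((A : Set G) ∪ {t}) := hgen ▸ Subgroup.mem_top x
  induction hx using Subgroup.closure_induction with
  | mem y hy =>
    rcases hy with hyA | rfl
    · exact Or.inl hyA
    · exact Or.inr ⟨1, A.one_mem, (mul_one y).symm⟩
  | one => exact Or.inl A.one_mem
  | mul y z _ _ ihy ihz =>
    rcases ihy with hyA | ⟨a, ha, rfl⟩ <;> rcases ihz with hzA | ⟨b, hb, rfl⟩
    · exact Or.inl (A.mul_mem hyA hzA)
    · exact Or.inr ⟨t⁻¹ * y * t * b, A.mul_mem (hconj y hyA) hb, by group⟩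
    · exact Or.inr ⟨a * z, A.mul_mem ha hzA, mul_assoc t a z⟩
    · have h : t * a * (t * b) = t ^ 2 * (t⁻¹ * a * t) * b := by group
      exact Or.inl (h ▸ A.mul_mem (A.mul_mem ht2 (hconj a ha)) hb)
  | inv y _ ihy =>
    rcases ihy with hyA | ⟨a, ha, rfl⟩
    · exact Or.inl (A.inv_mem hyA)
    · exact Or.inr ⟨t⁻¹ * a⁻¹ * t * (t ^ 2)⁻¹,
        A.mul_mem (hconj _ (A.inv_mem ha)) (A.inv_mem ht2), by group⟩

theorem commutator_mem_eq_mul_self (htinv : ∀ a ∈ A, t⁻¹ * a * t = a⁻¹)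
    (hab : ∀ a ∈ A, ∀ b ∈ A, a * b = b * a) {a c : G} (ha : a ∈ A) (hc : c ∈ A) :
    (t * a)⁻¹ * c⁻¹ * (t * a) * c = c * c :=
  calc (t * a)⁻¹ * c⁻¹ * (t * a) * c
      = a⁻¹ * (t⁻¹ * c⁻¹ * t) * a * c := by group
    _ = a⁻¹ * c * a * c := by rw [htinv _ (A.inv_mem hc), inv_inv]
    _ = c * c := by rw [mul_assoc a⁻¹, hab c hc a ha]; group

theorem commutator_mul_eq_mul_self (htinv : ∀ a ∈ A, t⁻¹ * a * t = a⁻¹)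
    (hab : ∀ a ∈ A, ∀ b ∈ A, a * b = b * a) {a b : G} (ha : a ∈ A) (hb : b ∈ A) :
    (t * a)⁻¹ * (t * b)⁻¹ * (t * a) * (t * b) = a⁻¹ * b * (a⁻¹ * b) :=
  calc (t * a)⁻¹ * (t * b)⁻¹ * (t * a) * (t * b)
      = a⁻¹ * (t⁻¹ * (b⁻¹ * a) * t) * b := by group
    _ = a⁻¹ * (a⁻¹ * b) * b := by rw [htinv _ (A.mul_mem (A.inv_mem hb) ha)]; group
    _ = a⁻¹ * (b * a⁻¹) * b := by rw [hab a⁻¹ (A.inv_mem ha) b hb]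
    _ = a⁻¹ * b * (a⁻¹ * b) := by group

theorem commutators_eq_squares (htinv : ∀ a ∈ A, t⁻¹ * a * t = a⁻¹)
    (hab : ∀ a ∈ A, ∀ b ∈ A, a * b = b * a) (hcoset : ∀ x : G, x ∈ A ∨ ∃ b ∈ A, x = t * b)
    {a : G} (ha : a ∈ A) :
    {c : G | ∃ x : G, c = (t * a)⁻¹ * x⁻¹ * (t * a) * x} = {c : G | ∃ b ∈ A, c = b * b} := by
  ext c
  constructor
  · rintro ⟨x, rfl⟩
    rcases hcoset x with hx | ⟨b, hb, rfl⟩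
    · exact ⟨x, hx, commutator_mem_eq_mul_self htinv hab ha hx⟩
    · exact ⟨a⁻¹ * b, A.mul_mem (A.inv_mem ha) hb, commutator_mul_eq_mul_self htinv hab ha hb⟩
  · rintro ⟨b, hb, rfl⟩
    exact ⟨b, (commutator_mem_eq_mul_self htinv hab ha hb).symm⟩

theorem coe_closure_squares (hab : ∀ a ∈ A, ∀ b ∈ A, a * b = b * a) :
    (Subgroup.closure {c : G | ∃ b ∈ A, c = b * b} : Set G) = {c : G | ∃ b ∈ A, c = b * b} := by
  refine Set.Subset.antisymm (fun x hx ↦ ?_) Subgroup.subset_closure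
  induction hx using Subgroup.closure_induction with
  | mem y hy => exact hy
  | one => exact ⟨1, A.one_mem, (mul_one 1).symm⟩
  | mul y z _ _ ihy ihz =>
    obtain ⟨b, hb, rfl⟩ := ihy
    obtain ⟨d, hd, rfl⟩ := ihz
    exact ⟨b * d, A.mul_mem hb hd, Commute.mul_mul_mul_comm (hab b hb d hd) b d⟩
  | inv y _ ihy =>
    obtain ⟨b, hb, rfl⟩ := ihy
    exact ⟨b⁻¹, A.inv_mem hb, mul_inv_rev b b⟩

end

/-- Let `G` be generated by an abelian subgroup `A` and an element `t` with `t² ∈ A`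
and `t⁻¹at = a⁻¹` for all `a ∈ A`. Then for every `g ∉ A`,
`K(g) = [g, G]` equals `{a² : a ∈ A}`. -/
theorem Kcomm_eq_squares {G : Type*} [Group G] (A : Subgroup G) (t : G)
    (hab : ∀ a ∈ A, ∀ b ∈ A, a * b = b * a)
    (ht2 : t ^ 2 ∈ A) (htinv : ∀ a ∈ A, t⁻¹ * a * t = a⁻¹)
    (hgen : Subgroup.closure ((A : Set G) ∪ {t}) = ⊤)
    (g : G) (hg : g ∉ A) :
    (Kcomm g : Set G) = {b : G | ∃ a ∈ A, b = a * a} := by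
  have hconj : ∀ c ∈ A, t⁻¹ * c * t ∈ A := fun c hc ↦ htinv c hc ▸ A.inv_mem hc
  have hcoset := mem_or_exists_eq_mul_of_closure_eq_top hconj ht2 hgen
  obtain ⟨a, ha, rfl⟩ := (hcoset g).resolve_left hg
  rw [Kcomm, commutators_eq_squares htinv hab hcoset ha, coe_closure_squares hab]
end

section
/- Let G be a group generated by an abelian subgroup A and an element t ∈ G such that t² ∈ A and t⁻¹at = a⁻¹ for every a ∈ A. Then for every g ∈ G with g ∉ A, the coset gK(g) equals the conjugacy class C_g of g in G, where K(g) = [g, G]. -/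
section CommutatorCoset

variable {G : Type*} [Group G]

theorem coset_Kcomm_eq_setOf_isConj {g : G}
    (h : ∀ k ∈ Kcomm g, ∃ x, k = g⁻¹ * x⁻¹ * g * x) :
    {x : G | ∃ k ∈ Kcomm g, x = g * k} = {x : G | IsConj g x} := by
  ext y
  simp only [Set.mem_ofPred_eq, isConj_iff]
  constructor
  · rintro ⟨k, hk, rfl⟩
    obtain ⟨x, rfl⟩ := h k hk
    exact ⟨x⁻¹, by group⟩
  · rintro ⟨c, rfl⟩
    exact ⟨g⁻¹ * c * g * c⁻¹, Subgroup.subset_closure ⟨c⁻¹, by group⟩, by group⟩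

end CommutatorCoset

section InvertedSubgroup

variable {G : Type*} [Group G] {A : Subgroup G} {t : G}

theorem commute_of_conj_eq_inv (htinv : ∀ a ∈ A, t⁻¹ * a * t = a⁻¹) {a b : G}
    (ha : a ∈ A) (hb : b ∈ A) : Commute a b := by
  have h := htinv (a * b) (A.mul_mem ha hb)
  rw [show t⁻¹ * (a * b) * t = (t⁻¹ * a * t) * (t⁻¹ * b * t) by group,
    htinv a ha, htinv b hb, mul_inv_rev] at h
  exact Commute.inv_inv_iff.mp h

theorem mul_eq_inv_mul_of_conj_eq_inv (htinv : ∀ a ∈ A, t⁻¹ * a * t = a⁻¹) {a : G}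
    (ha : a ∈ A) : t * a = a⁻¹ * t := by
  calc t * a = t * (t⁻¹ * a⁻¹ * t) := by rw [htinv _ (A.inv_mem ha), inv_inv]
    _ = a⁻¹ * t := by group

section Generated

variable (ht2 : t ^ 2 ∈ A) (htinv : ∀ a ∈ A, t⁻¹ * a * t = a⁻¹)
  (hgen : Subgroup.closure ((A : Set G) ∪ {t}) = ⊤)
include ht2 htinv hgen

theorem mem_or_exists_eq_mul_of_closure_eq_top_s6 (x : G) : x ∈ A ∨ ∃ b ∈ A, x = b * t := by
  have hx : x ∈ Subgroup.closure ((A : Set G) ∪ {t}) := hgen ▸ Subgroup.mem_top x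
  induction hx using Subgroup.closure_induction_left with
  | one => exact .inl A.one_mem
  | mul_left x hx y _ ih =>
    rcases hx with hx | hx
    · rcases ih with hy | ⟨b, hb, rfl⟩
      · exact .inl (A.mul_mem hx hy)
      · exact .inr ⟨x * b, A.mul_mem hx hb, (mul_assoc x b t).symm⟩
    · subst x
      rcases ih with hy | ⟨b, hb, rfl⟩
      · exact .inr ⟨y⁻¹, A.inv_mem hy, mul_eq_inv_mul_of_conj_eq_inv htinv hy⟩
      · refine .inl ?_
        rw [← mul_assoc, mul_eq_inv_mul_of_conj_eq_inv htinv hb, mul_assoc, ← sq]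
        exact A.mul_mem (A.inv_mem hb) ht2
  | inv_mul_cancel x hx y _ ih =>
    rcases hx with hx | hx
    · rcases ih with hy | ⟨b, hb, rfl⟩
      · exact .inl (A.mul_mem (A.inv_mem hx) hy)
      · exact .inr ⟨x⁻¹ * b, A.mul_mem (A.inv_mem hx) hb, (mul_assoc x⁻¹ b t).symm⟩
    · subst x
      rcases ih with hy | ⟨b, hb, rfl⟩
      · refine .inr ⟨y⁻¹ * (t ^ 2)⁻¹, A.mul_mem (A.inv_mem hy) (A.inv_mem ht2), ?_⟩
        calc t⁻¹ * y = (t⁻¹ * y * t) * t⁻¹ := by group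
          _ = y⁻¹ * (t ^ 2)⁻¹ * t := by rw [htinv y hy]; group
      · exact .inl (by rw [← mul_assoc, htinv b hb]; exact A.inv_mem hb)

theorem conj_eq_inv_of_notMem {g : G} (hg : g ∉ A) {c : G} (hc : c ∈ A) :
    g⁻¹ * c * g = c⁻¹ := by
  obtain ⟨a, ha, rfl⟩ := (mem_or_exists_eq_mul_of_closure_eq_top_s6 ht2 htinv hgen g).resolve_left hg
  calc (a * t)⁻¹ * c * (a * t) = t⁻¹ * (a⁻¹ * c * a) * t := by group
    _ = c⁻¹ := by
      rw [(commute_of_conj_eq_inv htinv (A.inv_mem ha) hc).eq, inv_mul_cancel_right, htinv c hc]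

theorem inv_mul_mem_of_notMem {x y : G} (hx : x ∉ A) (hy : y ∉ A) : x⁻¹ * y ∈ A := by
  obtain ⟨a, ha, rfl⟩ := (mem_or_exists_eq_mul_of_closure_eq_top_s6 ht2 htinv hgen x).resolve_left hx
  obtain ⟨b, hb, rfl⟩ := (mem_or_exists_eq_mul_of_closure_eq_top_s6 ht2 htinv hgen y).resolve_left hy
  have hab : a⁻¹ * b ∈ A := A.mul_mem (A.inv_mem ha) hb
  rw [show (a * t)⁻¹ * (b * t) = t⁻¹ * (a⁻¹ * b) * t by group, htinv _ hab]
  exact A.inv_mem hab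

end Generated

section SquareCommutators

variable {g : G} (hinv : ∀ c ∈ A, g⁻¹ * c * g = c⁻¹)
include hinv

theorem commutator_eq_sq_of_conj_eq_inv {b : G} (hb : b ∈ A) : g⁻¹ * b⁻¹ * g * b = b ^ 2 := by
  rw [hinv _ (A.inv_mem hb), inv_inv, sq]

theorem exists_commutator_eq_sq (hcoset : ∀ x ∉ A, g⁻¹ * x ∈ A) (x : G) :
    ∃ b ∈ A, g⁻¹ * x⁻¹ * g * x = b ^ 2 := by
  by_cases hx : x ∈ A
  · exact ⟨x, hx, commutator_eq_sq_of_conj_eq_inv hinv hx⟩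
  · refine ⟨g⁻¹ * x, hcoset x hx, ?_⟩
    rw [← commutator_eq_sq_of_conj_eq_inv hinv (hcoset x hx)]
    group

theorem exists_commutator_eq_of_mem_Kcomm (hcoset : ∀ x ∉ A, g⁻¹ * x ∈ A) {k : G}
    (hk : k ∈ Kcomm g) : ∃ x, k = g⁻¹ * x⁻¹ * g * x := by
  suffices ∃ b ∈ A, k = b ^ 2 by
    obtain ⟨b, hb, rfl⟩ := this
    exact ⟨b, (commutator_eq_sq_of_conj_eq_inv hinv hb).symm⟩
  induction hk using Subgroup.closure_induction with
  | mem _ hc =>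
    obtain ⟨x, rfl⟩ := hc
    exact exists_commutator_eq_sq hinv hcoset x
  | one => exact ⟨1, A.one_mem, (one_pow 2).symm⟩
  | mul _ _ _ _ ihb ihc =>
    obtain ⟨b, hb, rfl⟩ := ihb
    obtain ⟨c, hc, rfl⟩ := ihc
    exact ⟨b * c, A.mul_mem hb hc, ((commute_of_conj_eq_inv hinv hb hc).mul_pow 2).symm⟩
  | inv _ _ ih =>
    obtain ⟨b, hb, rfl⟩ := ih
    exact ⟨b⁻¹, A.inv_mem hb, (inv_pow b 2).symm⟩

end SquareCommutators

end InvertedSubgroup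

theorem coset_Kcomm_eq_conjClass_general {G : Type*} [Group G] (A : Subgroup G) (t : G)
    (ht2 : t ^ 2 ∈ A) (htinv : ∀ a ∈ A, t⁻¹ * a * t = a⁻¹)
    (hgen : Subgroup.closure ((A : Set G) ∪ {t}) = ⊤)
    (g : G) (hg : g ∉ A) :
    {x : G | ∃ k ∈ Kcomm g, x = g * k} = {x : G | IsConj g x} :=
  coset_Kcomm_eq_setOf_isConj fun _ =>
    exists_commutator_eq_of_mem_Kcomm (fun _ => conj_eq_inv_of_notMem ht2 htinv hgen hg)
      (fun _ => inv_mul_mem_of_notMem ht2 htinv hgen hg)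

/-- Let `G` be generated by an abelian subgroup `A` and an element `t` with `t² ∈ A`
and `t⁻¹at = a⁻¹` for all `a ∈ A`. Then for every `g ∉ A`, the coset `g·K(g)`
equals the conjugacy class of `g` in `G`. -/
theorem coset_Kcomm_eq_conjClass {G : Type*} [Group G] (A : Subgroup G) (t : G)
    (hab : ∀ a ∈ A, ∀ b ∈ A, a * b = b * a)
    (ht2 : t ^ 2 ∈ A) (htinv : ∀ a ∈ A, t⁻¹ * a * t = a⁻¹)
    (hgen : Subgroup.closure ((A : Set G) ∪ {t}) = ⊤)
    (g : G) (hg : g ∉ A) :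
    {x : G | ∃ k ∈ Kcomm g, x = g * k} = {x : G | IsConj g x} :=
  coset_Kcomm_eq_conjClass_general A t ht2 htinv hgen g hg
end

section
/- Let G be a group whose derived subgroup G′ is infinite cyclic, generated by ρ. If g ∈ G has finite order and centralizes ρ, then g lies in the center of G. -/
/-!
Conjugation by `g` sends `x` to `⁅g, x⁆ * x`. Since `⁅g, x⁆` lies in `G′ = ⟨ρ⟩`, it commutes
with `g`, so conjugation by `g ^ k` sends `x` to `⁅g, x⁆ ^ k * x`. Taking `k` to be the order of
`g` shows that `⁅g, x⁆` has finite order; but `⟨ρ⟩` is torsion-free, so `⁅g, x⁆ = 1`.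
-/

open scoped commutatorElement

section

open Subgroup

variable {G : Type*} [Group G]

theorem eq_one_of_mem_zpowers_of_isOfFinOrder {ρ c : G} (hρ : ¬IsOfFinOrder ρ)
    (hc : c ∈ zpowers ρ) (hfin : IsOfFinOrder c) : c = 1 := by
  obtain ⟨n, rfl⟩ := mem_zpowers_iff.mp hc
  by_contra hne
  have hn : n ≠ 0 := by rintro rfl; exact hne (zpow_zero ρ)
  obtain ⟨m, hm, hpow⟩ := isOfFinOrder_iff_zpow_eq_one.mp hfin
  exact hρ <| isOfFinOrder_iff_zpow_eq_one.mpr ⟨n * m, mul_ne_zero hn hm, by rw [zpow_mul, hpow]⟩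

theorem pow_mul_mul_inv_pow_of_commute_commutatorElement {g x : G} (hc : Commute g ⁅g, x⁆)
    (k : ℕ) : g ^ k * x * (g ^ k)⁻¹ = ⁅g, x⁆ ^ k * x := by
  induction k with
  | zero => simp
  | succ k ih =>
    calc g ^ (k + 1) * x * (g ^ (k + 1))⁻¹ = g * (g ^ k * x * (g ^ k)⁻¹) * g⁻¹ := by group
      _ = ⁅g, x⁆ ^ k * (g * x * g⁻¹) := by
        rw [ih, ← mul_assoc, ← mul_assoc, (hc.pow_right k).eq]; simp only [mul_assoc]
      _ = ⁅g, x⁆ ^ (k + 1) * x := by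
        rw [show g * x * g⁻¹ = ⁅g, x⁆ * x by rw [commutatorElement_def]; group, pow_succ, mul_assoc]

theorem isOfFinOrder_commutatorElement {g x : G} (hg : IsOfFinOrder g)
    (hc : Commute g ⁅g, x⁆) : IsOfFinOrder ⁅g, x⁆ := by
  have hconj := pow_mul_mul_inv_pow_of_commute_commutatorElement hc (orderOf g)
  rw [pow_orderOf_eq_one, one_mul, inv_one, mul_one, right_eq_mul] at hconj
  exact isOfFinOrder_iff_pow_eq_one.mpr ⟨orderOf g, hg.orderOf_pos, hconj⟩

end

/-- If the derived subgroup of `G` is infinite cyclic, generated by `ρ`, and `g ∈ G`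
has finite order and centralizes `ρ`, then `g` is central in `G`. -/
theorem mem_center_of_torsion_centralizes {G : Type*} [Group G] (ρ : G)
    (hder : commutator G = Subgroup.zpowers ρ) (hρ : ¬ IsOfFinOrder ρ)
    (g : G) (hg : IsOfFinOrder g) (hcomm : g * ρ = ρ * g) :
    g ∈ Subgroup.center G := by
  refine Subgroup.mem_center_iff.mpr fun x ↦ ?_
  have hmem : ⁅g, x⁆ ∈ Subgroup.zpowers ρ :=
    hder ▸ Subgroup.commutator_mem_commutator (Subgroup.mem_top g) (Subgroup.mem_top x)
  have hc : Commute g ⁅g, x⁆ := by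
    obtain ⟨n, hn⟩ := Subgroup.mem_zpowers_iff.mp hmem
    exact hn ▸ Commute.zpow_right hcomm n
  have hone := eq_one_of_mem_zpowers_of_isOfFinOrder hρ hmem (isOfFinOrder_commutatorElement hg hc)
  exact (commutatorElement_eq_one_iff_mul_comm.mp hone).symm
end
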